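/- Let d be a positive squarefree integer with d ≡ 3 (mod 4), let a be a positive integer, and let ψ be a Dirichlet character modulo a. Then for every complex s with Re(s) > 1, ∑_{n=1}^{∞} ψ(n)·F(n)^{−s} = (∑_{n=1}^{∞} ψ(n)·n^{−s}) · ∏_{p prime} (1 − ψ(p)·p^{−s} + (1 + χ(p)/p)^{−s}·ψ(p)·p^{−s}), where both series converge absolutely and the product over primes converges. -/

import Mathlib

/-- The quadratic character attached to `ℚ(√-d)`, defined on primes:
`χ(2) = (-1)^((d²-1)/8)` and `χ(p) = (-d/p)` (Legendre symbol) for odd primes `p`;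
`0` off the primes. -/
noncomputable def chi (d : ℕ) (p : ℕ) : ℤ :=
  if hp : p.Prime then
    if p = 2 then (-1) ^ ((d ^ 2 - 1) / 8)
    else @legendreSym p ⟨hp⟩ (-(d : ℤ))
  else 0

/-- `F(n) = n · ∏_{p ∣ n} (1 + χ(p)/p)`. -/
noncomputable def F (d : ℕ) (n : ℕ) : ℚ :=
  n * ∏ p ∈ n.primeFactors, (1 + (chi d p : ℚ) / (p : ℚ))

/-!
The summand `f(n) = ψ(n) F(n)^{-s}` is multiplicative, and at a prime power
`f(p^k) = c_p^{-s} t_p^k` for `k ≥ 1`, where `c_p = 1 + χ(p)/p ∈ [1/2, 2]` and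
`t_p = ψ(p) p^{-s}`. Hence `‖f‖` is dominated on prime powers by a geometric series in `p^{-σ}`,
which makes `∑ ‖f(n)‖` bounded by `exp(2^{σ+1} ζ(σ))` through finite Euler products, and the Euler
factor of `f` is `1 + c_p^{-s} t_p / (1 - t_p) = (1 - t_p)⁻¹ (1 - t_p + c_p^{-s} t_p)`.
Multiplying the Euler product of `∑ f(n)` by that of `1 / L(ψ, s)` (legitimate since
`L(ψ, s) ≠ 0`) gives the product formula.
-/

lemma abs_chi_le_one (d p : ℕ) : |chi d p| ≤ 1 := by
  unfold chi
  split_ifs with hp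
  · simp
  · have : Fact p.Prime := ⟨hp⟩
    by_cases h0 : ((-d : ℤ) : ZMod p) = 0
    · simp [(legendreSym.eq_zero_iff p _).mpr h0]
    · rcases legendreSym.eq_one_or_neg_one p h0 with h | h <;> simp [h]
  · simp

lemma half_le_one_add_chi_div {d p : ℕ} (hp : p.Prime) : (1 / 2 : ℚ) ≤ 1 + (chi d p : ℚ) / p := by
  have hp2 : (2 : ℚ) ≤ p := by exact_mod_cast hp.two_le
  have hchi : -1 ≤ (chi d p : ℚ) := by exact_mod_cast (abs_le.mp (abs_chi_le_one d p)).1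
  have : -1 / 2 ≤ (chi d p : ℚ) / p := by
    rw [le_div_iff₀ (by linarith)]
    linarith
  linarith

lemma one_add_chi_div_pos {d p : ℕ} (hp : p.Prime) : 0 < 1 + (chi d p : ℚ) / p :=
  lt_of_lt_of_le (by norm_num) (half_le_one_add_chi_div hp)

lemma F_zero (d : ℕ) : F d 0 = 0 := by
  simp [F]

lemma F_one (d : ℕ) : F d 1 = 1 := by
  simp [F]

lemma F_nonneg (d n : ℕ) : 0 ≤ F d n :=
  mul_nonneg n.cast_nonneg <|
    Finset.prod_nonneg fun _ hp => (one_add_chi_div_pos (Nat.prime_of_mem_primeFactors hp)).le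

lemma F_mul (d : ℕ) {m n : ℕ} (h : m.Coprime n) : F d (m * n) = F d m * F d n := by
  rcases eq_or_ne m 0 with rfl | hm
  · simp [F_zero]
  rcases eq_or_ne n 0 with rfl | hn
  · simp [F_zero]
  simp only [F, Nat.primeFactors_mul hm hn, Finset.prod_union h.disjoint_primeFactors,
    Nat.cast_mul]
  ring

lemma F_prime_pow (d : ℕ) {p : ℕ} (hp : p.Prime) {k : ℕ} (hk : k ≠ 0) :
    F d (p ^ k) = (p : ℚ) ^ k * (1 + (chi d p : ℚ) / p) := by
  rw [F, Nat.primeFactors_prime_pow hk hp, Finset.prod_singleton, Nat.cast_pow]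

lemma summable_and_tsum_le_of_le_geometric {u : ℕ → ℝ} {r C : ℝ} (hu : 0 ≤ u) (hr₀ : 0 ≤ r)
    (hr : r ≤ 1 / 2) (hC : 0 ≤ C) (hb : ∀ k, u (k + 1) ≤ C * r ^ (k + 1)) :
    Summable u ∧ ∑' k, u k ≤ u 0 + 2 * C * r := by
  have hgeo : HasSum (fun k => C * r ^ (k + 1)) (C * r * (1 - r)⁻¹) := by
    simpa only [pow_succ', mul_assoc] using
      (hasSum_geometric_of_lt_one hr₀ (by linarith)).mul_left (C * r)
  have hshift : Summable fun k => u (k + 1) :=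
    hgeo.summable.of_nonneg_of_le (fun k => hu _) hb
  have hsum : Summable u := (summable_nat_add_iff 1).mp hshift
  refine ⟨hsum, ?_⟩
  have hinv : (1 - r)⁻¹ ≤ 2 := by
    rw [inv_le_comm₀ (by linarith) (by norm_num)]
    linarith
  calc ∑' k, u k = u 0 + ∑' k, u (k + 1) := hsum.tsum_eq_zero_add
    _ ≤ u 0 + C * r * (1 - r)⁻¹ := by
        rw [← hgeo.tsum_eq]
        exact (add_le_add_iff_left _).mpr (hshift.tsum_le_tsum hb hgeo.summable)
    _ ≤ u 0 + 2 * C * r := by nlinarith [mul_nonneg hC hr₀]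

lemma rpow_neg_le_half_of_prime {p : ℕ} (hp : p.Prime) {σ : ℝ} (hσ : 1 ≤ σ) :
    (p : ℝ) ^ (-σ) ≤ 1 / 2 := by
  have hp2 : (2 : ℝ) ≤ p := by exact_mod_cast hp.two_le
  calc (p : ℝ) ^ (-σ) ≤ (p : ℝ) ^ (-1 : ℝ) :=
        Real.rpow_le_rpow_of_exponent_le (by linarith) (by linarith)
    _ = (p : ℝ)⁻¹ := Real.rpow_neg_one _
    _ ≤ 1 / 2 := by rw [one_div]; exact inv_anti₀ (by norm_num) hp2

section Multiplicative

variable {u : ℕ → ℝ} (hu : 0 ≤ u) (h₀ : u 0 = 0) (h₁ : u 1 = 1)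
  (hmul : ∀ {m n : ℕ}, m.Coprime n → u (m * n) = u m * u n)
include hu h₀ h₁ hmul

lemma sum_le_prod_primesBelow_tsum (hsum : ∀ {p : ℕ}, p.Prime → Summable fun k => u (p ^ k))
    (t : Finset ℕ) : ∑ m ∈ t, u m ≤ ∏ p ∈ (t.sup id + 1).primesBelow, ∑' k, u (p ^ k) := by
  set N := t.sup id + 1
  have hprod := (EulerProduct.summable_and_hasSum_smoothNumbers_prod_primesBelow_tsum h₁ hmul
    (fun hp => (hsum hp).congr fun k => (Real.norm_of_nonneg (hu _)).symm) N).2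
  have hsmooth : ∑ m ∈ t with m ∈ N.smoothNumbers, u m = ∑ m ∈ t, u m := by
    refine Finset.sum_filter_of_ne fun m hm hm₀ => Nat.mem_smoothNumbers_of_lt ?_ ?_
    · exact Nat.pos_of_ne_zero fun h => hm₀ (h ▸ h₀)
    · exact Nat.lt_succ_of_le (Finset.le_sup (f := id) hm)
  rw [← hsmooth, ← Finset.sum_subtype_eq_sum_filter]
  exact sum_le_hasSum _ (fun m _ => hu m) hprod

theorem summable_of_multiplicative_of_prime_pow_le {σ C : ℝ} (hσ : 1 < σ) (hC : 0 ≤ C)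
    (hb : ∀ p : ℕ, p.Prime → ∀ k, u (p ^ (k + 1)) ≤ C * ((p : ℝ) ^ (-σ)) ^ (k + 1)) :
    Summable u := by
  have hlocal {p : ℕ} (hp : p.Prime) :=
    summable_and_tsum_le_of_le_geometric (fun k => hu (p ^ k)) (by positivity)
      (rpow_neg_le_half_of_prime hp hσ.le) hC (hb p hp)
  have hζ : Summable fun n : ℕ => (n : ℝ) ^ (-σ) := Real.summable_nat_rpow.mpr (by linarith)
  refine summable_of_sum_le hu (c := Real.exp (2 * C * ∑' n : ℕ, (n : ℝ) ^ (-σ))) fun t => ?_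
  calc ∑ m ∈ t, u m
      ≤ ∏ p ∈ (t.sup id + 1).primesBelow, ∑' k, u (p ^ k) :=
        sum_le_prod_primesBelow_tsum hu h₀ h₁ hmul (fun hp => (hlocal hp).1) t
    _ ≤ ∏ p ∈ (t.sup id + 1).primesBelow, Real.exp (2 * C * (p : ℝ) ^ (-σ)) := by
        refine Finset.prod_le_prod (fun p _ => tsum_nonneg fun k => hu _) fun p hp => ?_
        have h := (hlocal (Nat.prime_of_mem_primesBelow hp)).2
        simp only [pow_zero, h₁] at h
        linarith [Real.add_one_le_exp (2 * C * (p : ℝ) ^ (-σ))]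
    _ = Real.exp (2 * C * ∑ p ∈ (t.sup id + 1).primesBelow, (p : ℝ) ^ (-σ)) := by
        rw [← Real.exp_sum, Finset.mul_sum]
    _ ≤ Real.exp (2 * C * ∑' n : ℕ, (n : ℝ) ^ (-σ)) := by
        gcongr
        exact hζ.sum_le_tsum _ fun n _ => by positivity

end Multiplicative

lemma Complex.ratCast_mul_cpow {q r : ℚ} (hq : 0 ≤ q) (hr : 0 ≤ r) (z : ℂ) :
    ((q * r : ℚ) : ℂ) ^ z = (q : ℂ) ^ z * (r : ℂ) ^ z := by
  simpa only [Rat.cast_mul, Complex.ofReal_ratCast] using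
    Complex.mul_cpow_ofReal_nonneg (a := q) (b := r) (mod_cast hq) (mod_cast hr) z

lemma Complex.norm_ratCast_cpow_of_pos {q : ℚ} (hq : 0 < q) (z : ℂ) :
    ‖(q : ℂ) ^ z‖ = (q : ℝ) ^ z.re := by
  rw [← Complex.ofReal_ratCast, Complex.norm_cpow_eq_rpow_re_of_pos (by exact_mod_cast hq)]

lemma norm_one_add_chi_div_cpow_neg_le {d p : ℕ} (hp : p.Prime) {s : ℂ} (hs : 0 ≤ s.re) :
    ‖((1 + (chi d p : ℚ) / p : ℚ) : ℂ) ^ (-s)‖ ≤ 2 ^ s.re := by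
  rw [Complex.norm_ratCast_cpow_of_pos (one_add_chi_div_pos hp), Complex.neg_re]
  have hhalf : (1 / 2 : ℝ) ≤ ((1 + (chi d p : ℚ) / p : ℚ) : ℝ) := by
    simpa using Rat.cast_le (K := ℝ) |>.mpr (half_le_one_add_chi_div (d := d) hp)
  calc ((1 + (chi d p : ℚ) / p : ℚ) : ℝ) ^ (-s.re) ≤ (1 / 2 : ℝ) ^ (-s.re) :=
        Real.rpow_le_rpow_of_nonpos (by norm_num) hhalf (by linarith)
    _ = 2 ^ s.re := by rw [one_div, Real.inv_rpow (by norm_num), Real.rpow_neg (by norm_num), inv_inv]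

lemma DirichletCharacter.norm_dirichletSummandHom_le {a : ℕ} (ψ : DirichletCharacter ℂ a)
    {s : ℂ} (hs : s ≠ 0) {n : ℕ} (hn : 0 < n) :
    ‖dirichletSummandHom ψ hs n‖ ≤ (n : ℝ) ^ (-s.re) := by
  simp only [dirichletSummandHom, MonoidWithZeroHom.coe_mk, ZeroHom.coe_mk, norm_mul,
    Complex.norm_natCast_cpow_of_pos hn, Complex.neg_re]
  exact mul_le_of_le_one_left (by positivity) (ψ.norm_le_one _)

section DirichletSeries

variable {a : ℕ} (d : ℕ) (ψ : DirichletCharacter ℂ a) (s : ℂ)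

noncomputable def dirichletFSummand (n : ℕ) : ℂ :=
  ψ n * ((F d n : ℚ) : ℂ) ^ (-s)

noncomputable def eulerFactorDF (p : ℕ) : ℂ :=
  1 - ψ p * (p : ℂ) ^ (-s) + ((1 + (chi d p : ℚ) / p : ℚ) : ℂ) ^ (-s) * ψ p * (p : ℂ) ^ (-s)

variable {d ψ s}

lemma dirichletFSummand_zero (hs : s ≠ 0) : dirichletFSummand d ψ s 0 = 0 := by
  simp [dirichletFSummand, F_zero, Complex.zero_cpow (neg_ne_zero.mpr hs)]

lemma dirichletFSummand_one : dirichletFSummand d ψ s 1 = 1 := by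
  simp [dirichletFSummand, F_one]

lemma dirichletFSummand_mul {m n : ℕ} (h : m.Coprime n) :
    dirichletFSummand d ψ s (m * n) = dirichletFSummand d ψ s m * dirichletFSummand d ψ s n := by
  rw [dirichletFSummand, F_mul d h, Complex.ratCast_mul_cpow (F_nonneg d m) (F_nonneg d n),
    Nat.cast_mul, map_mul, dirichletFSummand, dirichletFSummand]
  ring

lemma dirichletFSummand_prime_pow (hs : s ≠ 0) {p : ℕ} (hp : p.Prime) {k : ℕ} (hk : k ≠ 0) :
    dirichletFSummand d ψ s (p ^ k) =
      ((1 + (chi d p : ℚ) / p : ℚ) : ℂ) ^ (-s) * (ψ p * (p : ℂ) ^ (-s)) ^ k := by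
  rw [show ψ p * (p : ℂ) ^ (-s) = dirichletSummandHom ψ hs p from rfl, ← map_pow,
    dirichletFSummand, F_prime_pow d hp hk, Complex.ratCast_mul_cpow (by positivity) (one_add_chi_div_pos hp).le]
  simp only [dirichletSummandHom, MonoidWithZeroHom.coe_mk, ZeroHom.coe_mk]
  push_cast
  ring

lemma summable_norm_dirichletFSummand (hs : 1 < s.re) :
    Summable fun n => ‖dirichletFSummand d ψ s n‖ := by
  have hs₀ : s ≠ 0 := Complex.ne_zero_of_one_lt_re hs
  refine summable_of_multiplicative_of_prime_pow_le (fun n => norm_nonneg _)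
    (by rw [dirichletFSummand_zero hs₀, norm_zero]) (by rw [dirichletFSummand_one, norm_one])
    (fun h => by rw [dirichletFSummand_mul h, norm_mul]) hs (by positivity : (0 : ℝ) ≤ 2 ^ s.re)
    fun p hp k => ?_
  rw [dirichletFSummand_prime_pow hs₀ hp k.succ_ne_zero, norm_mul, norm_pow]
  gcongr
  · exact norm_one_add_chi_div_cpow_neg_le hp (by linarith)
  · exact ψ.norm_dirichletSummandHom_le hs₀ hp.pos

lemma one_sub_mul_tsum_dirichletFSummand_prime_pow (hs : 1 < s.re) {p : ℕ} (hp : p.Prime) :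
    (1 - ψ p * (p : ℂ) ^ (-s)) * ∑' k, dirichletFSummand d ψ s (p ^ k) = eulerFactorDF d ψ s p := by
  have hs₀ : s ≠ 0 := Complex.ne_zero_of_one_lt_re hs
  have ht : ‖ψ p * (p : ℂ) ^ (-s)‖ < 1 := (ψ.norm_dirichletSummandHom_le hs₀ hp.pos).trans_lt <|
    Real.rpow_lt_one_of_one_lt_of_neg (by exact_mod_cast hp.one_lt) (by linarith)
  have h1t : 1 - ψ p * (p : ℂ) ^ (-s) ≠ 0 :=
    sub_ne_zero.mpr fun h => by rw [← h, norm_one] at ht; exact ht.false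
  have hsum : Summable fun k => dirichletFSummand d ψ s (p ^ k) :=
    (summable_norm_dirichletFSummand hs).of_norm.comp_injective (Nat.pow_right_injective hp.two_le)
  rw [hsum.tsum_eq_zero_add, pow_zero, dirichletFSummand_one,
    tsum_congr fun k => dirichletFSummand_prime_pow hs₀ hp k.succ_ne_zero]
  simp_rw [pow_succ', ← mul_assoc]
  rw [tsum_mul_left, tsum_geometric_of_norm_lt_one ht, eulerFactorDF]
  field_simp

end DirichletSeries

theorem euler_product_for_DF_general (d : ℕ)
    (a : ℕ) (ψ : DirichletCharacter ℂ a) (s : ℂ) (hs : 1 < s.re) :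
    Summable (fun n : ℕ => ‖ψ ((n + 1 : ℕ) : ZMod a) * ((F d (n + 1) : ℚ) : ℂ) ^ (-s)‖) ∧
    Summable (fun n : ℕ => ‖ψ ((n + 1 : ℕ) : ZMod a) * ((n + 1 : ℕ) : ℂ) ^ (-s)‖) ∧
    Multipliable (fun p : Nat.Primes =>
      1 - ψ ((p.1 : ℕ) : ZMod a) * (p.1 : ℂ) ^ (-s) +
        ((1 + (chi d p.1 : ℚ) / (p.1 : ℚ) : ℚ) : ℂ) ^ (-s) * ψ ((p.1 : ℕ) : ZMod a) *
          (p.1 : ℂ) ^ (-s)) ∧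
    (∑' n : ℕ, ψ ((n + 1 : ℕ) : ZMod a) * ((F d (n + 1) : ℚ) : ℂ) ^ (-s)) =
      (∑' n : ℕ, ψ ((n + 1 : ℕ) : ZMod a) * ((n + 1 : ℕ) : ℂ) ^ (-s)) *
        ∏' p : Nat.Primes,
          (1 - ψ ((p.1 : ℕ) : ZMod a) * (p.1 : ℂ) ^ (-s) +
            ((1 + (chi d p.1 : ℚ) / (p.1 : ℚ) : ℚ) : ℂ) ^ (-s) * ψ ((p.1 : ℕ) : ZMod a) *
              (p.1 : ℂ) ^ (-s)) := by
  have hs₀ : s ≠ 0 := Complex.ne_zero_of_one_lt_re hs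
  have hF := summable_norm_dirichletFSummand (d := d) (ψ := ψ) hs
  have hL : Summable fun n : ℕ => ‖ψ n * (n : ℂ) ^ (-s)‖ := summable_dirichletSummand ψ hs
  have hL₀ : ∑' n : ℕ, ψ n * (n : ℂ) ^ (-s) ≠ 0 :=
    tsum_dirichletSummand ψ hs ▸ ψ.LSeries_ne_zero_of_one_lt_re hs
  have hprod := ((EulerProduct.eulerProduct_completely_multiplicative_hasProd
    (summable_dirichletSummand ψ hs)).inv₀ hL₀).mul
    (EulerProduct.eulerProduct_hasProd dirichletFSummand_one dirichletFSummand_mul hF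
      (dirichletFSummand_zero hs₀))
  have hB : HasProd (fun p : Nat.Primes => eulerFactorDF d ψ s p)
      ((∑' n : ℕ, ψ n * (n : ℂ) ^ (-s))⁻¹ * ∑' n, dirichletFSummand d ψ s n) :=
    hprod.congr_fun fun p => by
      rw [inv_inv]; exact (one_sub_mul_tsum_dirichletFSummand_prime_pow hs p.prop).symm
  have hfactor : ∑' n, dirichletFSummand d ψ s n =
      (∑' n : ℕ, ψ n * (n : ℂ) ^ (-s)) * ∏' p : Nat.Primes, eulerFactorDF d ψ s p := by
    rw [hB.tprod_eq, mul_inv_cancel_left₀ hL₀]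
  rw [hF.of_norm.tsum_eq_zero_add, hL.of_norm.tsum_eq_zero_add, dirichletFSummand_zero hs₀,
    Nat.cast_zero (R := ℂ), Complex.zero_cpow (neg_ne_zero.mpr hs₀), mul_zero, zero_add,
    zero_add] at hfactor
  exact ⟨(summable_nat_add_iff 1).mpr hF,
    (summable_nat_add_iff (f := fun n : ℕ => ‖ψ n * (n : ℂ) ^ (-s)‖) 1).mpr hL,
    hB.multipliable, hfactor⟩

/-- For `Re(s) > 1`: `∑_{n≥1} ψ(n)·F(n)^{-s} = (∑_{n≥1} ψ(n)·n^{-s}) ·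
`∏_p (1 - ψ(p)p^{-s} + (1 + χ(p)/p)^{-s}·ψ(p)·p^{-s})`, where both series converge
absolutely and the product over the primes converges. -/
theorem euler_product_for_DF (d : ℕ) (hd : 0 < d) (hsq : Squarefree d) (hmod : d % 4 = 3)
    (a : ℕ) (ha : 0 < a) (ψ : DirichletCharacter ℂ a) (s : ℂ) (hs : 1 < s.re) :
    Summable (fun n : ℕ => ‖ψ ((n + 1 : ℕ) : ZMod a) * ((F d (n + 1) : ℚ) : ℂ) ^ (-s)‖) ∧
    Summable (fun n : ℕ => ‖ψ ((n + 1 : ℕ) : ZMod a) * ((n + 1 : ℕ) : ℂ) ^ (-s)‖) ∧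
    Multipliable (fun p : Nat.Primes =>
      1 - ψ ((p.1 : ℕ) : ZMod a) * (p.1 : ℂ) ^ (-s) +
        ((1 + (chi d p.1 : ℚ) / (p.1 : ℚ) : ℚ) : ℂ) ^ (-s) * ψ ((p.1 : ℕ) : ZMod a) *
          (p.1 : ℂ) ^ (-s)) ∧
    (∑' n : ℕ, ψ ((n + 1 : ℕ) : ZMod a) * ((F d (n + 1) : ℚ) : ℂ) ^ (-s)) =
      (∑' n : ℕ, ψ ((n + 1 : ℕ) : ZMod a) * ((n + 1 : ℕ) : ℂ) ^ (-s)) *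
        ∏' p : Nat.Primes,
          (1 - ψ ((p.1 : ℕ) : ZMod a) * (p.1 : ℂ) ^ (-s) +
            ((1 + (chi d p.1 : ℚ) / (p.1 : ℚ) : ℚ) : ℂ) ^ (-s) * ψ ((p.1 : ℕ) : ZMod a) *
              (p.1 : ℂ) ^ (-s)) :=
  euler_product_for_DF_general d a ψ s hs
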